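/- Theorem 4.2(b). Let c > 0 and let {(P_1^{(j)},…,P_m^{(j)})}_{j≥0} be a sequence of tuples of orthonormal matrices satisfying the sufficient-ascent condition of the context. If (P_{*1},…,P_{*m}) is an accumulation point of the sequence (the limit in Frobenius norm of a subsequence), then (P_{*1},…,P_{*m}) satisfies the KKT condition: for every 1 ≤ ℓ ≤ m, ℋ_ℓ(P_{*1},…,P_{*m}) = P_{*ℓ}·((P_{*ℓ})^H ℋ_ℓ(P_{*1},…,P_{*m})) and (P_{*ℓ})^H ℋ_ℓ(P_{*1},…,P_{*m}) is Hermitian positive semidefinite. -/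

import Mathlib

open Matrix Filter Topology
open scoped ComplexOrder Classical

/-- The entries of the multi-mode product `B ×₁ P₁ᴴ ×₂ ⋯ ×ₘ Pₘᴴ` of an `m`-mode tensor
`B` of size `n 0 × ⋯ × n (m-1)` with the conjugate transposes of the matrices `P ℓ`.
The column index set of `P ℓ` is `(s : Fin t) × Fin (κ ℓ s)`, encoding the partition of
`k ℓ = Σ s, κ ℓ s` into `t` blocks (block `s` has the indices with first component `s`). -/
noncomputable def multiProd {m t : ℕ} {n : Fin m → ℕ} {κ : Fin m → Fin t → ℕ}
    (B : (∀ ℓ, Fin (n ℓ)) → ℂ)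
    (P : ∀ ℓ, Matrix (Fin (n ℓ)) ((s : Fin t) × Fin (κ ℓ s)) ℂ) :
    (∀ ℓ, (s : Fin t) × Fin (κ ℓ s)) → ℂ :=
  fun i => ∑ j : ∀ ℓ, Fin (n ℓ), (∏ ℓ, star (P ℓ (j ℓ) (i ℓ))) * B j

/-- The block-diagonal objective
`f(P₁,…,Pₘ) = ‖BDiag(B ×₁ P₁ᴴ ×₂ ⋯ ×ₘ Pₘᴴ)‖_F²`: the sum of `|T(i)|²` over all
multi-indices `i` whose components all lie in the same diagonal block. -/
noncomputable def fObj {m t : ℕ} {n : Fin m → ℕ} {κ : Fin m → Fin t → ℕ}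
    (B : (∀ ℓ, Fin (n ℓ)) → ℂ)
    (P : ∀ ℓ, Matrix (Fin (n ℓ)) ((s : Fin t) × Fin (κ ℓ s)) ℂ) : ℝ :=
  ∑ i : ∀ ℓ, (s : Fin t) × Fin (κ ℓ s),
    if ∃ s : Fin t, ∀ ℓ, (i ℓ).1 = s then Complex.normSq (multiProd B P i) else 0

/-- The tensor `B_{ℓ,s} = B ×₁ P_{1s}ᴴ ⋯ ×_{ℓ-1} P_{ℓ-1,s}ᴴ ×_{ℓ+1} P_{ℓ+1,s}ᴴ ⋯ ×ₘ P_{ms}ᴴ`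
(mode products by the `s`-th column blocks over every mode except `ℓ`), evaluated at the index
whose `ℓ`-th component is `a` and whose other components are given by `ih`. -/
noncomputable def Bls {m t : ℕ} {n : Fin m → ℕ} {κ : Fin m → Fin t → ℕ}
    (B : (∀ ℓ, Fin (n ℓ)) → ℂ)
    (P : ∀ ℓ, Matrix (Fin (n ℓ)) ((s : Fin t) × Fin (κ ℓ s)) ℂ)
    (ℓ : Fin m) (s : Fin t) (a : Fin (n ℓ))
    (ih : ∀ r : {r : Fin m // r ≠ ℓ}, Fin (κ r.1 s)) : ℂ :=
  ∑ j : ∀ r, Fin (n r),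
    if j ℓ = a then (∏ r : {r : Fin m // r ≠ ℓ}, star (P r.1 (j r.1) ⟨s, ih r⟩)) * B j else 0

/-- The matrix `H_{ℓs}(P₁,…,Pₘ) ∈ ℂ^{n_ℓ×n_ℓ}` with `(a,b)`-entry
`Σ_î B_{ℓ,s}(î[ℓ↦a])·conj(B_{ℓ,s}(î[ℓ↦b]))`, summed over multi-indices `î` with the
`ℓ`-th coordinate ignored. -/
noncomputable def Hmat {m t : ℕ} {n : Fin m → ℕ} {κ : Fin m → Fin t → ℕ}
    (B : (∀ ℓ, Fin (n ℓ)) → ℂ)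
    (P : ∀ ℓ, Matrix (Fin (n ℓ)) ((s : Fin t) × Fin (κ ℓ s)) ℂ)
    (ℓ : Fin m) (s : Fin t) : Matrix (Fin (n ℓ)) (Fin (n ℓ)) ℂ :=
  Matrix.of fun a b =>
    ∑ ih : ∀ r : {r : Fin m // r ≠ ℓ}, Fin (κ r.1 s),
      Bls B P ℓ s a ih * star (Bls B P ℓ s b ih)

/-- The partial Euclidean gradient `ℋ_ℓ(P₁,…,Pₘ) ∈ ℂ^{n_ℓ×k_ℓ}` of `fObj` with respect to
`P ℓ` (for the real inner product `⟨X,Y⟩ = Re tr(Yᴴ X)`): its `s`-th column block is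
`2 · H_{ℓs}(P₁,…,Pₘ) · P_{ℓs}`. -/
noncomputable def scrH {m t : ℕ} {n : Fin m → ℕ} {κ : Fin m → Fin t → ℕ}
    (B : (∀ ℓ, Fin (n ℓ)) → ℂ)
    (P : ∀ ℓ, Matrix (Fin (n ℓ)) ((s : Fin t) × Fin (κ ℓ s)) ℂ)
    (ℓ : Fin m) : Matrix (Fin (n ℓ)) ((s : Fin t) × Fin (κ ℓ s)) ℂ :=
  Matrix.of fun a sc => 2 * ∑ b, Hmat B P ℓ sc.1 a b * P ℓ b sc

/-- The trace norm (nuclear norm) of a complex matrix: the sum of all its singular values,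
computed as the sum of the square roots of the eigenvalues of `Hᴴ * H`. -/
noncomputable def traceNorm {α β : Type*} [Fintype α] [Fintype β] [DecidableEq β]
    (H : Matrix α β ℂ) : ℝ :=
  ∑ i, Real.sqrt ((Matrix.posSemidef_conjTranspose_mul_self H).1.eigenvalues i)

/-- The Frobenius norm of a complex matrix. -/
noncomputable def frobNorm {α β : Type*} [Fintype α] [Fintype β] (X : Matrix α β ℂ) : ℝ :=
  Real.sqrt (∑ a, ∑ b, Complex.normSq (X a b))

/-!
For orthonormal `P` and any `H`, `Re tr(Pᴴ H) ≤ ‖H‖_tr`, with equality exactly when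
`Pᴴ H` is the positive semidefinite factor of a polar decomposition `H = P (Pᴴ H)`; this is
the KKT condition. Along the iterates the objective increases and is bounded, so the ascent
steps tend to zero, and by the sufficient-ascent condition so do the duality gaps
`‖ℋ_ℓ‖_tr - Re tr(P_ℓᴴ ℋ_ℓ)`. Since `ℋ_ℓ` depends continuously on the iterates and the trace
norm is lower semicontinuous (a supremum of the linear functionals `Re tr(Gᴴ ·)` over
contractions `G`), the gap vanishes at any accumulation point.
-/

open scoped InnerProductSpace

lemma eq_norm_smul_of_re_inner_eq_norm {𝕜 E : Type*} [RCLike 𝕜] [NormedAddCommGroup E]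
    [InnerProductSpace 𝕜 E] {x y : E} (hx : ‖x‖ = 1) (h : RCLike.re ⟪x, y⟫_𝕜 = ‖y‖) :
    y = (‖y‖ : 𝕜) • x := by
  have hre : RCLike.re ⟪y, (‖y‖ : 𝕜) • x⟫_𝕜 = ‖y‖ ^ 2 := by
    rw [inner_smul_right, RCLike.re_ofReal_mul, inner_re_symm, h, sq]
  have hsq : ‖y - (‖y‖ : 𝕜) • x‖ ^ 2 = 0 := by
    rw [norm_sub_sq (𝕜 := 𝕜), hre, norm_smul, RCLike.norm_ofReal, abs_norm, hx]
    ring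
  rw [← sub_eq_zero, ← norm_eq_zero]
  exact pow_eq_zero_iff two_ne_zero |>.mp hsq

lemma tendsto_zero_of_mul_le_sub_succ {f g : ℕ → ℝ} {c : ℝ} (hc : 0 < c) (hg : ∀ j, 0 ≤ g j)
    (hf : BddAbove (Set.range f)) (h : ∀ j, c * g j ≤ f (j + 1) - f j) :
    Tendsto g atTop (𝓝 0) := by
  have hmono : Monotone f :=
    monotone_nat_of_le_succ fun j => sub_nonneg.mp <| (mul_nonneg hc.le (hg j)).trans (h j)
  have hlim := tendsto_atTop_ciSup hmono hf
  have hstep : Tendsto (fun j => (f (j + 1) - f j) / c) atTop (𝓝 0) := by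
    simpa using ((hlim.comp (tendsto_add_atTop_nat 1)).sub hlim).div_const c
  exact squeeze_zero hg (fun j => (le_div_iff₀' hc).mpr (h j)) hstep

namespace Matrix

variable {α ι : Type*} [Fintype α]

def columnVec (X : Matrix α ι ℂ) (i : ι) : EuclideanSpace ℂ α :=
  WithLp.toLp 2 fun a => X a i

lemma inner_columnVec (X Y : Matrix α ι ℂ) (i : ι) :
    ⟪columnVec X i, columnVec Y i⟫_ℂ = (Xᴴ * Y) i i := by
  simp only [columnVec, PiLp.inner_apply, RCLike.inner_apply, mul_apply, conjTranspose_apply]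
  exact Finset.sum_congr rfl fun _ _ => mul_comm _ _

lemma norm_columnVec_sq (X : Matrix α ι ℂ) (i : ι) :
    ‖columnVec X i‖ ^ 2 = ((Xᴴ * X) i i).re := by
  rw [← inner_columnVec, ← inner_self_eq_norm_sq (𝕜 := ℂ)]
  rfl

lemma norm_columnVec_le_one [DecidableEq ι] {X : Matrix α ι ℂ} (hX : (1 - Xᴴ * X).PosSemidef)
    (i : ι) : ‖columnVec X i‖ ≤ 1 := by
  have h := (Complex.le_def.mp (hX.diag_nonneg (i := i))).1
  rw [sub_apply, one_apply_eq, Complex.sub_re, Complex.one_re, Complex.zero_re, sub_nonneg,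
    ← norm_columnVec_sq] at h
  exact (sq_le_one_iff₀ (norm_nonneg _)).mp h

lemma norm_apply_le_one_of_conjTranspose_mul_self_eq_one [DecidableEq ι] {X : Matrix α ι ℂ}
    (hX : Xᴴ * X = 1) (a : α) (i : ι) : ‖X a i‖ ≤ 1 :=
  (PiLp.norm_apply_le (columnVec X i) a).trans <|
    norm_columnVec_le_one (by rw [hX, sub_self]; exact PosSemidef.zero) i

lemma norm_columnVec_of_conjTranspose_mul_self_eq_diagonal [DecidableEq ι] {X : Matrix α ι ℂ}
    {σ : ι → ℝ} (hσ : ∀ i, 0 ≤ σ i) (hX : Xᴴ * X = diagonal (fun i => ((σ i ^ 2 : ℝ) : ℂ)))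
    (i : ι) : ‖columnVec X i‖ = σ i := by
  have h := norm_columnVec_sq X i
  rw [hX, diagonal_apply_eq, Complex.ofReal_re] at h
  exact (sq_eq_sq₀ (norm_nonneg _) (hσ i)).mp h

lemma norm_apply_le_frobNorm [Fintype ι] (X : Matrix α ι ℂ) (a : α) (i : ι) :
    ‖X a i‖ ≤ frobNorm X := by
  rw [frobNorm, Complex.norm_def,
    ← Fintype.sum_prod_type' (f := fun a b => Complex.normSq (X a b))]
  exact Real.sqrt_le_sqrt <|
    Finset.single_le_sum (f := fun p : α × ι => Complex.normSq (X p.1 p.2))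
      (fun _ _ => Complex.normSq_nonneg _) (Finset.mem_univ (a, i))

lemma tendsto_of_frobNorm_sub_tendsto_zero [Fintype ι] {β : Type*} {l : Filter β}
    {X : β → Matrix α ι ℂ} {X₀ : Matrix α ι ℂ}
    (h : Tendsto (fun j => frobNorm (X j - X₀)) l (𝓝 0)) : Tendsto X l (𝓝 X₀) := by
  refine tendsto_pi_nhds.mpr fun a => tendsto_pi_nhds.mpr fun i => ?_
  rw [tendsto_iff_norm_sub_tendsto_zero]
  exact squeeze_zero (fun _ => norm_nonneg _) (fun j => norm_apply_le_frobNorm (X j - X₀) a i) h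

section TraceNorm

variable [Fintype ι] [DecidableEq ι]

lemma trace_conjTranspose_mul_eq_sum_inner (G H : Matrix α ι ℂ) {W : Matrix ι ι ℂ}
    (hW : W ∈ unitaryGroup ι ℂ) :
    trace (Gᴴ * H) = ∑ i, ⟪columnVec (G * W) i, columnVec (H * W) i⟫_ℂ := by
  have hWW : W * Wᴴ = 1 := mem_unitaryGroup_iff.mp hW
  calc trace (Gᴴ * H) = trace ((G * W)ᴴ * (H * W)) := by
        rw [conjTranspose_mul, Matrix.mul_assoc, trace_mul_comm Wᴴ, Matrix.mul_assoc,
          Matrix.mul_assoc, hWW, Matrix.mul_one]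
    _ = ∑ i, ⟪columnVec (G * W) i, columnVec (H * W) i⟫_ℂ := by
        simp only [trace, diag_apply, inner_columnVec]

lemma exists_unitary_conjTranspose_mul_self_eq_diagonal (H : Matrix α ι ℂ) :
    ∃ W ∈ unitaryGroup ι ℂ, ∃ σ : ι → ℝ, (∀ i, 0 ≤ σ i) ∧
      (H * W)ᴴ * (H * W) = diagonal (fun i => ((σ i ^ 2 : ℝ) : ℂ)) ∧
      traceNorm H = ∑ i, σ i := by
  have hM := posSemidef_conjTranspose_mul_self H
  refine ⟨hM.1.eigenvectorUnitary, (hM.1.eigenvectorUnitary).2,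
    fun i => Real.sqrt (hM.1.eigenvalues i), fun i => Real.sqrt_nonneg _, ?_, rfl⟩
  have hdiag := hM.1.conjStarAlgAut_star_eigenvectorUnitary
  simp only [Unitary.conjStarAlgAut_apply, Unitary.coe_star, star_star] at hdiag
  simp only [Real.sq_sqrt (hM.eigenvalues_nonneg _), conjTranspose_mul, Matrix.mul_assoc,
    ← star_eq_conjTranspose] at hdiag ⊢
  exact hdiag

lemma re_trace_le_traceNorm (G H : Matrix α ι ℂ) (hG : (1 - Gᴴ * G).PosSemidef) :
    (trace (Gᴴ * H)).re ≤ traceNorm H := by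
  obtain ⟨W, hW, σ, hσ, hdiag, htn⟩ := exists_unitary_conjTranspose_mul_self_eq_diagonal H
  have hGW : (1 - (G * W)ᴴ * (G * W)).PosSemidef := by
    have hWW : Wᴴ * W = 1 := mem_unitaryGroup_iff'.mp hW
    convert hG.conjTranspose_mul_mul_same W using 1
    rw [Matrix.mul_sub, Matrix.sub_mul, Matrix.mul_one, hWW, conjTranspose_mul]
    simp only [Matrix.mul_assoc]
  rw [trace_conjTranspose_mul_eq_sum_inner G H hW, Complex.re_sum, htn]
  refine Finset.sum_le_sum fun i _ => ?_
  calc (⟪columnVec (G * W) i, columnVec (H * W) i⟫_ℂ).re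
      ≤ ‖columnVec (G * W) i‖ * ‖columnVec (H * W) i‖ := re_inner_le_norm (𝕜 := ℂ) _ _
    _ ≤ 1 * σ i := by
        rw [norm_columnVec_of_conjTranspose_mul_self_eq_diagonal hσ hdiag]
        exact mul_le_mul_of_nonneg_right (norm_columnVec_le_one hGW i) (hσ i)
    _ = σ i := one_mul _

lemma eq_mul_and_posSemidef_of_traceNorm_le (P H : Matrix α ι ℂ) (hP : Pᴴ * P = 1)
    (hH : traceNorm H ≤ (trace (Pᴴ * H)).re) :
    H = P * (Pᴴ * H) ∧ (Pᴴ * H).PosSemidef := by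
  obtain ⟨W, hW, σ, hσ, hdiag, htn⟩ := exists_unitary_conjTranspose_mul_self_eq_diagonal H
  have hWW : W * Wᴴ = 1 := mem_unitaryGroup_iff.mp hW
  set p := columnVec (P * W)
  set h := columnVec (H * W)
  have hp : ∀ i, ‖p i‖ = 1 := fun i => by
    have hsq := norm_columnVec_sq (P * W) i
    rw [conjTranspose_mul, Matrix.mul_assoc, ← Matrix.mul_assoc Pᴴ, hP, Matrix.one_mul,
      ← star_eq_conjTranspose, mem_unitaryGroup_iff'.mp hW, one_apply_eq, Complex.one_re] at hsq
    exact (pow_eq_one_iff_of_nonneg (norm_nonneg _) two_ne_zero).mp hsq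
  have hh : ∀ i, ‖h i‖ = σ i := norm_columnVec_of_conjTranspose_mul_self_eq_diagonal hσ hdiag
  have hle : ∀ i ∈ Finset.univ, (⟪p i, h i⟫_ℂ).re ≤ σ i := fun i _ =>
    (re_inner_le_norm (𝕜 := ℂ) _ _).trans_eq (by rw [hp, hh, one_mul])
  -- The termwise Cauchy–Schwarz bounds add up to `traceNorm H`, so each is an equality.
  have heq : ∀ i, (⟪p i, h i⟫_ℂ).re = σ i := by
    refine fun i => (Finset.sum_eq_sum_iff_of_le hle).mp
      (le_antisymm (Finset.sum_le_sum hle) ?_) i (Finset.mem_univ i)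
    rwa [← htn, ← Complex.re_sum, ← trace_conjTranspose_mul_eq_sum_inner P H hW]
  set D : Matrix ι ι ℂ := diagonal fun i => (σ i : ℂ)
  have hHW : H * W = P * W * D := by
    ext a i
    have hcol := eq_norm_smul_of_re_inner_eq_norm (𝕜 := ℂ) (hp i) ((heq i).trans (hh i).symm)
    rw [hh i] at hcol
    simpa [D, h, p, columnVec, mul_comm] using congrArg (· a) hcol
  have hH : H = P * (W * D * Wᴴ) := by
    calc H = H * W * Wᴴ := by rw [Matrix.mul_assoc, hWW, Matrix.mul_one]
      _ = P * (W * D * Wᴴ) := by rw [hHW]; simp only [Matrix.mul_assoc]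
  have hPH : Pᴴ * H = W * D * Wᴴ := by
    rw [hH, ← Matrix.mul_assoc, hP, Matrix.one_mul]
  refine ⟨hPH ▸ hH, hPH ▸ ?_⟩
  exact (posSemidef_diagonal_iff.mpr fun i => Complex.zero_le_real.mpr (hσ i))
    |>.mul_mul_conjTranspose_same W

lemma exists_re_trace_eq_traceNorm (H : Matrix α ι ℂ) :
    ∃ G : Matrix α ι ℂ, (1 - Gᴴ * G).PosSemidef ∧ (trace (Gᴴ * H)).re = traceNorm H := by
  obtain ⟨W, hW, σ, hσ, hdiag, htn⟩ := exists_unitary_conjTranspose_mul_self_eq_diagonal H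
  have hWW : W * Wᴴ = 1 := mem_unitaryGroup_iff.mp hW
  have hWW' : Wᴴ * W = 1 := mem_unitaryGroup_iff'.mp hW
  -- `(σ i)⁻¹ = 0` where `σ i = 0`, so `G` is the partial isometry of the polar decomposition.
  set E : Matrix ι ι ℂ := diagonal fun i => ((σ i)⁻¹ : ℂ)
  have hE : Eᴴ = E := by simp [E]
  have hGG : (H * W * E * Wᴴ)ᴴ * (H * W * E * Wᴴ)
      = W * diagonal (fun i => ((σ i * (σ i)⁻¹ : ℝ) : ℂ)) * Wᴴ := by
    have h : E * ((H * W)ᴴ * (H * W)) * E = diagonal fun i => ((σ i * (σ i)⁻¹ : ℝ) : ℂ) := by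
      rw [hdiag, diagonal_mul_diagonal, diagonal_mul_diagonal]
      congr 1 with i
      push_cast
      rw [sq, ← mul_assoc, inv_mul_mul_self]
    rw [← h]
    simp only [conjTranspose_mul, conjTranspose_conjTranspose, hE, Matrix.mul_assoc]
  refine ⟨H * W * E * Wᴴ, ?_, ?_⟩
  · have hconj : ∀ D : Matrix ι ι ℂ, 1 - W * D * Wᴴ = W * (1 - D) * Wᴴ := fun D => by
      rw [Matrix.mul_sub, Matrix.sub_mul, Matrix.mul_one, hWW]
    rw [hGG, hconj, ← diagonal_one, diagonal_sub]
    refine (posSemidef_diagonal_iff.mpr fun i => ?_).mul_mul_conjTranspose_same W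
    rw [← Complex.ofReal_one, ← Complex.ofReal_sub, Complex.zero_le_real, sub_nonneg]
    exact mul_inv_le_one
  · have h : (H * W * E * Wᴴ)ᴴ * H = W * (E * ((H * W)ᴴ * (H * W))) * Wᴴ := by
      simp only [conjTranspose_mul, conjTranspose_conjTranspose, hE, Matrix.mul_assoc, hWW,
        Matrix.mul_one]
    rw [h, trace_mul_cycle, hWW', Matrix.one_mul, hdiag, diagonal_mul_diagonal, trace_diagonal,
      Complex.re_sum, htn]
    refine Finset.sum_congr rfl fun i _ => ?_
    rw [← Complex.ofReal_inv, ← Complex.ofReal_mul, Complex.ofReal_re, sq, ← mul_assoc,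
      inv_mul_mul_self]

/-- Lower semicontinuity of the trace norm: it is a supremum of the continuous functions
`H ↦ Re tr (Gᴴ H)`. -/
lemma traceNorm_le_of_tendsto {β : Type*} {l : Filter β} [l.NeBot] {H : β → Matrix α ι ℂ}
    {H₀ : Matrix α ι ℂ} {r : ℝ} (hH : Tendsto H l (𝓝 H₀))
    (hr : Tendsto (fun j => traceNorm (H j)) l (𝓝 r)) : traceNorm H₀ ≤ r := by
  obtain ⟨G, hG, hGH⟩ := exists_re_trace_eq_traceNorm H₀
  have hcont : Continuous fun X : Matrix α ι ℂ => (trace (Gᴴ * X)).re := by fun_prop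
  rw [← hGH]
  exact le_of_tendsto_of_tendsto' (hcont.tendsto H₀ |>.comp hH) hr
    fun j => re_trace_le_traceNorm G (H j) hG

lemma eq_mul_and_posSemidef_of_tendsto {β : Type*} {l : Filter β} [l.NeBot]
    {P H : β → Matrix α ι ℂ} {P₀ H₀ : Matrix α ι ℂ} (hP : Tendsto P l (𝓝 P₀))
    (hH : Tendsto H l (𝓝 H₀)) (hPP : ∀ j, (P j)ᴴ * P j = 1)
    (hgap : Tendsto (fun j => traceNorm (H j) - (trace ((P j)ᴴ * H j)).re) l (𝓝 0)) :
    H₀ = P₀ * (P₀ᴴ * H₀) ∧ (P₀ᴴ * H₀).PosSemidef := by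
  have hgram : Continuous fun X : Matrix α ι ℂ => Xᴴ * X := by fun_prop
  have hP₀ : P₀ᴴ * P₀ = 1 :=
    tendsto_nhds_unique ((hgram.tendsto P₀).comp hP)
      (by simp only [Function.comp_def, hPP]; exact tendsto_const_nhds)
  have hpair : Continuous fun X : Matrix α ι ℂ × Matrix α ι ℂ => (trace (X.1ᴴ * X.2)).re := by
    fun_prop
  have hre : Tendsto (fun j => (trace ((P j)ᴴ * H j)).re) l (𝓝 (trace (P₀ᴴ * H₀)).re) := by
    simpa only [Function.comp_def] using (hpair.tendsto (P₀, H₀)).comp (hP.prodMk_nhds hH)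
  exact eq_mul_and_posSemidef_of_traceNorm_le P₀ H₀ hP₀ <|
    traceNorm_le_of_tendsto hH (by simpa using hgap.add hre)

end TraceNorm

end Matrix

section Objective

variable {m t : ℕ} {n : Fin m → ℕ} {κ : Fin m → Fin t → ℕ} (B : (∀ ℓ, Fin (n ℓ)) → ℂ)

@[fun_prop]
lemma continuous_Bls (ℓ : Fin m) (s : Fin t) (a : Fin (n ℓ))
    (ih : ∀ r : {r : Fin m // r ≠ ℓ}, Fin (κ r.1 s)) :
    Continuous fun Q : ∀ ℓ, Matrix (Fin (n ℓ)) ((s : Fin t) × Fin (κ ℓ s)) ℂ =>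
      Bls B Q ℓ s a ih := by
  unfold Bls
  refine continuous_finsetSum _ fun j _ => ?_
  split_ifs <;> fun_prop

@[fun_prop]
lemma continuous_scrH (ℓ : Fin m) :
    Continuous fun Q : ∀ ℓ, Matrix (Fin (n ℓ)) ((s : Fin t) × Fin (κ ℓ s)) ℂ => scrH B Q ℓ := by
  unfold scrH Hmat
  fun_prop

lemma norm_multiProd_le {Q : ∀ ℓ, Matrix (Fin (n ℓ)) ((s : Fin t) × Fin (κ ℓ s)) ℂ}
    (hQ : ∀ ℓ, (Q ℓ)ᴴ * Q ℓ = 1) (i : ∀ ℓ, (s : Fin t) × Fin (κ ℓ s)) :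
    ‖multiProd B Q i‖ ≤ ∑ j, ‖B j‖ := by
  refine (norm_sum_le _ _).trans <| Finset.sum_le_sum fun j _ => ?_
  rw [norm_mul, norm_prod]
  refine mul_le_of_le_one_left (norm_nonneg _) <|
    Finset.prod_le_one (fun _ _ => norm_nonneg _) fun ℓ _ => ?_
  rw [norm_star]
  exact Matrix.norm_apply_le_one_of_conjTranspose_mul_self_eq_one (hQ ℓ) _ _

lemma fObj_le {Q : ∀ ℓ, Matrix (Fin (n ℓ)) ((s : Fin t) × Fin (κ ℓ s)) ℂ}
    (hQ : ∀ ℓ, (Q ℓ)ᴴ * Q ℓ = 1) :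
    fObj B Q ≤ Fintype.card (∀ ℓ, (s : Fin t) × Fin (κ ℓ s)) * (∑ j, ‖B j‖) ^ 2 := by
  rw [← nsmul_eq_mul, ← Finset.card_univ, ← Finset.sum_const]
  refine Finset.sum_le_sum fun i _ => ?_
  split_ifs
  · rw [Complex.normSq_eq_norm_sq]
    exact pow_le_pow_left₀ (norm_nonneg _) (norm_multiProd_le B hQ i) 2
  · positivity

end Objective

theorem stmt_18_general (m t : ℕ) (hm : 1 ≤ m)
    (n : Fin m → ℕ)
    (κ : Fin m → Fin t → ℕ)
    (B : (∀ ℓ, Fin (n ℓ)) → ℂ)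
    (P : ℕ → ∀ ℓ, Matrix (Fin (n ℓ)) ((s : Fin t) × Fin (κ ℓ s)) ℂ)
    (horth : ∀ j ℓ, (P j ℓ)ᴴ * P j ℓ = 1)
    (c : ℝ) (hc : 0 < c)
    (hsa : ∀ j : ℕ,
      c * (Finset.univ.sup' ⟨⟨0, hm⟩, Finset.mem_univ _⟩ fun ℓ : Fin m =>
          traceNorm (scrH B (P j) ℓ) - (Matrix.trace ((P j ℓ)ᴴ * scrH B (P j) ℓ)).re)
        ≤ fObj B (P (j + 1)) - fObj B (P j))
    (Pstar : ∀ ℓ, Matrix (Fin (n ℓ)) ((s : Fin t) × Fin (κ ℓ s)) ℂ)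
    (hacc : ∃ I : Set ℕ, I.Infinite ∧ ∀ ℓ,
      Tendsto (fun j => frobNorm (P j ℓ - Pstar ℓ)) (atTop ⊓ 𝓟 I) (𝓝 0)) :
    ∀ ℓ : Fin m,
      scrH B Pstar ℓ = Pstar ℓ * ((Pstar ℓ)ᴴ * scrH B Pstar ℓ) ∧
      ((Pstar ℓ)ᴴ * scrH B Pstar ℓ).PosSemidef := by
  obtain ⟨I, hI, hfr⟩ := hacc
  have : (atTop ⊓ 𝓟 I).NeBot :=
    frequently_iff_neBot.mp (Nat.frequently_atTop_iff_infinite.mpr hI)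
  have hP : Tendsto P (atTop ⊓ 𝓟 I) (𝓝 Pstar) :=
    tendsto_pi_nhds.mpr fun ℓ => Matrix.tendsto_of_frobNorm_sub_tendsto_zero (hfr ℓ)
  set gap : ℕ → Fin m → ℝ := fun j ℓ =>
    traceNorm (scrH B (P j) ℓ) - (Matrix.trace ((P j ℓ)ᴴ * scrH B (P j) ℓ)).re
  have hgap_nonneg : ∀ j ℓ, 0 ≤ gap j ℓ := fun j ℓ =>
    sub_nonneg.mpr <| Matrix.re_trace_le_traceNorm _ _ (by rw [horth, sub_self]; exact .zero)
  have hgap : ∀ ℓ, Tendsto (fun j => gap j ℓ) atTop (𝓝 0) := by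
    have hmax := tendsto_zero_of_mul_le_sub_succ hc
      (fun j => (hgap_nonneg j ⟨0, hm⟩).trans (Finset.le_sup' _ (Finset.mem_univ _)))
      ⟨_, Set.forall_mem_range.mpr fun j => fObj_le B (horth j)⟩ hsa
    exact fun ℓ => squeeze_zero (hgap_nonneg · ℓ)
      (fun j => Finset.le_sup' (gap j) (Finset.mem_univ ℓ)) hmax
  intro ℓ
  exact Matrix.eq_mul_and_posSemidef_of_tendsto (tendsto_pi_nhds.mp hP ℓ)
    ((continuous_scrH B ℓ).tendsto Pstar |>.comp hP) (horth · ℓ)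
    ((hgap ℓ).mono_left inf_le_left)

/-- Theorem 4.2(b): under the sufficient-ascent condition, any accumulation
point `(P_{*1},…,P_{*m})` of the iterates satisfies the KKT condition: each
`ℋ_ℓ(P_*) = P_{*ℓ}·(P_{*ℓ}ᴴ ℋ_ℓ(P_*))` with `P_{*ℓ}ᴴ ℋ_ℓ(P_*)` Hermitian positive
semidefinite. -/
theorem stmt_18 (m t : ℕ) (hm : 1 ≤ m) (ht : 1 ≤ t)
    (n : Fin m → ℕ) (hn : ∀ ℓ, 1 ≤ n ℓ)
    (κ : Fin m → Fin t → ℕ) (hκ : ∀ ℓ s, 1 ≤ κ ℓ s)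
    (hkn : ∀ ℓ, (∑ s, κ ℓ s) ≤ n ℓ)
    (B : (∀ ℓ, Fin (n ℓ)) → ℂ)
    (P : ℕ → ∀ ℓ, Matrix (Fin (n ℓ)) ((s : Fin t) × Fin (κ ℓ s)) ℂ)
    (horth : ∀ j ℓ, (P j ℓ)ᴴ * P j ℓ = 1)
    (c : ℝ) (hc : 0 < c)
    (hsa : ∀ j : ℕ,
      c * (Finset.univ.sup' ⟨⟨0, hm⟩, Finset.mem_univ _⟩ fun ℓ : Fin m =>
          traceNorm (scrH B (P j) ℓ) - (Matrix.trace ((P j ℓ)ᴴ * scrH B (P j) ℓ)).re)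
        ≤ fObj B (P (j + 1)) - fObj B (P j))
    (Pstar : ∀ ℓ, Matrix (Fin (n ℓ)) ((s : Fin t) × Fin (κ ℓ s)) ℂ)
    (hacc : ∃ I : Set ℕ, I.Infinite ∧ ∀ ℓ,
      Tendsto (fun j => frobNorm (P j ℓ - Pstar ℓ)) (atTop ⊓ 𝓟 I) (𝓝 0)) :
    ∀ ℓ : Fin m,
      scrH B Pstar ℓ = Pstar ℓ * ((Pstar ℓ)ᴴ * scrH B Pstar ℓ) ∧
      ((Pstar ℓ)ᴴ * scrH B Pstar ℓ).PosSemidef :=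
  stmt_18_general m t hm n κ B P horth c hc hsa Pstar hacc
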